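/- arXiv:1909.06215 — 3 statements merged into one kernel-verified Lean document; each statement's English description precedes it below -/
import Mathlib

section
/- (Access and Change) For all states σ and τ, if M[[S]](σ) = {τ} then τ and σ agree on all variables outside change(D | S), i.e. τ[Var \ change(D | S)] = σ[Var \ change(D | S)]. -/
/-! Syntax -/

abbrev Var := ℕ
abbrev PName := ℕ

/-- Expressions: terms of a fixed first-order language. -/
inductive Expr : Type
  | var : Var → Expr
  | fn : ℕ → List Expr → Expr

/-- Assertions: formulas of the first-order language (with equality). -/
inductive Assertion : Type
  | tru : Assertion
  | eq : Expr → Expr → Assertion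
  | rel : ℕ → List Expr → Assertion
  | not : Assertion → Assertion
  | and : Assertion → Assertion → Assertion
  | ex : Var → Assertion → Assertion

/-- Implication, as a derived connective. -/
def Assertion.imp (p q : Assertion) : Assertion := .not (.and p (.not q))

/-- Statements. -/
inductive Stmt : Type
  | skip : Stmt
  | assign : List Var → List Expr → Stmt
  | call : PName → List Expr → Stmt
  | seq : Stmt → Stmt → Stmt
  | ifte : Assertion → Stmt → Stmt → Stmt
  | wh : Assertion → Stmt → Stmt
  | block : List Var → List Expr → Stmt → Stmt

/-- A set of procedure declarations `P(ū)::S`. -/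
abbrev Decls := List (PName × List Var × Stmt)

def lookupD (D : Decls) (P : PName) : Option (List Var × Stmt) :=
  (D.find? (fun d => d.1 == P)).map (·.2)

/-- Well-formedness: exactly one declaration per procedure name. -/
def Decls.Wf (D : Decls) : Prop := (D.map Prod.fst).Nodup

/-! Variables -/

def varsE : Expr → List Var
  | .var x => [x]
  | .fn _ ts => ts.attach.flatMap (fun t => varsE t.1)
decreasing_by
  have := List.sizeOf_lt_of_mem t.2
  simp only [Expr.fn.sizeOf_spec]
  omega

def varsEs (ts : List Expr) : List Var := ts.flatMap varsE

def varsA : Assertion → List Var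
  | .tru => []
  | .eq a b => varsE a ++ varsE b
  | .rel _ ts => varsEs ts
  | .not p => varsA p
  | .and p q => varsA p ++ varsA q
  | .ex x p => x :: varsA p

def freeA : Assertion → List Var
  | .tru => []
  | .eq a b => varsE a ++ varsE b
  | .rel _ ts => varsEs ts
  | .not p => freeA p
  | .and p q => freeA p ++ freeA q
  | .ex x p => (freeA p).filter (· != x)

def varsS : Stmt → List Var
  | .skip => []
  | .assign xs ts => xs ++ varsEs ts
  | .call _ ts => varsEs ts
  | .seq S₁ S₂ => varsS S₁ ++ varsS S₂
  | .ifte B S₁ S₂ => varsA B ++ varsS S₁ ++ varsS S₂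
  | .wh B S => varsA B ++ varsS S
  | .block xs ts S => xs ++ varsEs ts ++ varsS S

/-- Variables occurring in the declarations `D`. -/
def varsD (D : Decls) : List Var := D.flatMap (fun d => d.2.1 ++ varsS d.2.2)

/-- `var(D | S)`. -/
def varsProg (D : Decls) (S : Stmt) : List Var := varsS S ++ varsD D
/-! Semantics -/

/-- An interpretation of the first-order language. -/
structure Interp where
  Dom : Type
  nonempty : Nonempty Dom
  fn : ℕ → List Dom → Dom
  rel : ℕ → List Dom → Prop

/-- States over an interpretation. -/
abbrev Interp.State (I : Interp) := Var → I.Dom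

/-- Simultaneous update of a state at a list of (distinct) variables. -/
def updList {α : Type _} (σ : Var → α) : List Var → List α → Var → α
  | x :: xs, d :: ds => Function.update (updList σ xs ds) x d
  | _, _ => σ

/-- Value of an expression in a state. -/
def evalE (I : Interp) (σ : I.State) : Expr → I.Dom
  | .var x => σ x
  | .fn f ts => I.fn f (ts.attach.map (fun t => evalE I σ t.1))
decreasing_by
  have := List.sizeOf_lt_of_mem t.2
  simp only [Expr.fn.sizeOf_spec]
  omega

def evalEs (I : Interp) (σ : I.State) (ts : List Expr) : List I.Dom :=
  ts.map (evalE I σ)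

/-- Truth of an assertion in a state. -/
def satA (I : Interp) (σ : I.State) : Assertion → Prop
  | .tru => True
  | .eq a b => evalE I σ a = evalE I σ b
  | .rel r ts => I.rel r (evalEs I σ ts)
  | .not p => ¬ satA I σ p
  | .and p q => satA I σ p ∧ satA I σ q
  | .ex x p => ∃ d : I.Dom, satA I (Function.update σ x d) p

/-- `[[p]]_I`, the meaning of an assertion. -/
def meaning (I : Interp) (p : Assertion) : Set I.State := {σ | satA I σ p}

/-- An assertion true in `I` (in all states). -/
def valid (I : Interp) (p : Assertion) : Prop := ∀ σ : I.State, satA I σ p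

/-- Big-step (input/output) semantics of statements w.r.t. declarations `D`;
procifedure calls are interpreted by inlining (call-by-value) and blocks restore
the initial values of their local variables. -/
inductive BigStep (D : Decls) (I : Interp) : Stmt → I.State → I.State → Prop
  | skip {σ} : BigStep D I .skip σ σ
  | assign {xs ts σ} : BigStep D I (.assign xs ts) σ (updList σ xs (evalEs I σ ts))
  | seq {S₁ S₂ σ τ ρ} : BigStep D I S₁ σ τ → BigStep D I S₂ τ ρ →
      BigStep D I (.seq S₁ S₂) σ ρ
  | ifteT {B S₁ S₂ σ τ} : satA I σ B → BigStep D I S₁ σ τ →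
      BigStep D I (.ifte B S₁ S₂) σ τ
  | ifteF {B S₁ S₂ σ τ} : ¬ satA I σ B → BigStep D I S₂ σ τ →
      BigStep D I (.ifte B S₁ S₂) σ τ
  | whT {B S σ τ ρ} : satA I σ B → BigStep D I S σ τ → BigStep D I (.wh B S) τ ρ →
      BigStep D I (.wh B S) σ ρ
  | whF {B S σ} : ¬ satA I σ B → BigStep D I (.wh B S) σ σ
  | block {xs ts S σ τ} : BigStep D I (.seq (.assign xs ts) S) σ τ →
      BigStep D I (.block xs ts S) σ (updList τ xs (xs.map σ))
  | call {P us S ts σ τ} : lookupD D P = some (us, S) →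
      BigStep D I (.block us ts S) σ τ → BigStep D I (.call P ts) σ τ

/-- `M[[S]]`, the meaning of a statement: the set of final states. -/
def Sem (D : Decls) (I : Interp) (S : Stmt) (σ : I.State) : Set I.State :=
  {τ | BigStep D I S σ τ}

/-- `I ⊨ {p} S {q}`: partial correctness. -/
def HoareValid (D : Decls) (I : Interp) (p : Assertion) (S : Stmt) (q : Assertion) : Prop :=
  ∀ σ τ : I.State, satA I σ p → BigStep D I S σ τ → satA I τ q

/-! `change(D | S)` -/

/-- `change(∅ | S)` (calls contribute nothing). -/
def chgNo : Stmt → List Var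
  | .skip => []
  | .assign xs _ => xs
  | .call _ _ => []
  | .seq S₁ S₂ => chgNo S₁ ++ chgNo S₂
  | .ifte _ S₁ S₂ => chgNo S₁ ++ chgNo S₂
  | .wh _ S => chgNo S
  | .block xs _ S => (chgNo S).filter (fun x => !(xs.contains x))

/-- `change(D)`: union of `change(∅ | body)` over the declarations in `D`. -/
def changeD (D : Decls) : List Var := D.flatMap (fun d => chgNo d.2.2)

/-- `change(D | S)`. -/
def chg (D : Decls) : Stmt → List Var
  | .skip => []
  | .assign xs _ => xs
  | .call P _ =>
      match lookupD D P with
      | some (us, _) => (changeD D).filter (fun x => !(us.contains x))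
      | none => []
  | .seq S₁ S₂ => chg D S₁ ++ chg D S₂
  | .ifte _ S₁ S₂ => chg D S₁ ++ chg D S₂
  | .wh _ S => chg D S
  | .block xs _ S => (chg D S).filter (fun x => !(xs.contains x))
/-! Substitution -/

/-- The simultaneous substitution map `[x̄ := t̄]`. -/
def subMap (xs : List Var) (ts : List Expr) : Var → Option Expr :=
  fun y => ((xs.zip ts).find? (fun p => p.1 == y)).map (·.2)

def substE (m : Var → Option Expr) : Expr → Expr
  | .var x => (m x).getD (.var x)
  | .fn f ts => .fn f (ts.attach.map (fun t => substE m t.1))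
decreasing_by
  have := List.sizeOf_lt_of_mem t.2
  simp only [Expr.fn.sizeOf_spec]
  omega

def substA (m : Var → Option Expr) : Assertion → Assertion
  | .tru => .tru
  | .eq a b => .eq (substE m a) (substE m b)
  | .rel r ts => .rel r (ts.map (substE m))
  | .not p => .not (substA m p)
  | .and p q => .and (substA m p) (substA m q)
  | .ex x p => .ex x (substA (fun y => if y = x then none else m y) p)

/-- `p[x̄ := t̄]`. -/
def substList (p : Assertion) (xs : List Var) (ts : List Expr) : Assertion :=
  substA (subMap xs ts) p

/-- `∃ x̄ : p`. -/
def exList (xs : List Var) (p : Assertion) : Assertion := xs.foldr .ex p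

/-- The assertion `x̄ = z̄` for two lists of variables. -/
def eqVars (xs zs : List Var) : Assertion :=
  ((xs.zip zs).map (fun c => Assertion.eq (.var c.1) (.var c.2))).foldr .and .tru

/-- The assertion `t̄ = v̄` for a list of expressions and a list of variables. -/
def eqExprVars (ts : List Expr) (vs : List Var) : Assertion :=
  ((ts.zip vs).map (fun c => Assertion.eq c.1 (.var c.2))).foldr .and .tru

/-! Proof systems -/

abbrev Triple := Assertion × Stmt × Assertion

/-- Flags selecting the procedure-call related rules of the proof system. -/
structure PSys where
  hasPCall : Bool   -- the PROCEDURE CALL rule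
  hasRecG : Bool    -- the RECURSION rule (generic calls)
  hasRecII : Bool   -- the RECURSION II rule (of ABO)

def PSys.ABO : PSys := ⟨false, false, true⟩
def PSys.ABO1 : PSys := ⟨true, false, true⟩
def PSys.CBV : PSys := ⟨true, true, false⟩

/-- All procedure calls occurring in a statement. -/
def callsS : Stmt → List (PName × List Expr)
  | .skip => []
  | .assign _ _ => []
  | .call P ts => [(P, ts)]
  | .seq S₁ S₂ => callsS S₁ ++ callsS S₂
  | .ifte _ S₁ S₂ => callsS S₁ ++ callsS S₂
  | .wh _ S => callsS S
  | .block _ _ S => callsS S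

/-- All procedure calls occurring in the program `(D | S)`. -/
def callsProg (D : Decls) (S : Stmt) : List (PName × List Expr) :=
  callsS S ++ D.flatMap (fun d => callsS d.2.2)

/-- The generic call `P(ū)` of the `i`-th declaration of `D`. -/
def genCall (D : Decls) (i : Fin D.length) : Stmt :=
  .call (D.get i).1 (((D.get i).2.1).map Expr.var)

/-- The assumption set `{p₁}P₁(ū₁){q₁}, …, {pₙ}Pₙ(ūₙ){qₙ}` of generic calls. -/
def genSet (D : Decls) (pre post : Fin D.length → Assertion) : Set Triple :=
  Set.range (fun i : Fin D.length => (pre i, genCall D i, post i))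

/-- The assumption set of the RECURSION II rule. -/
def asmSet (cs : List ((PName × List Expr) × Assertion × Assertion)) : Set Triple :=
  {t | ∃ c ∈ cs, t = (c.2.1, Stmt.call c.1.1 c.1.2, c.2.2)}

/-- `HoareN sys D I Φ n p S q`: the correctness formula `{p}S{q}` is derivable in
the proof system selected by `sys` from the set `Φ` of assumptions and the
assertions true in `I`, using at most `n` applications of axioms and proof rules. -/
inductive HoareN (sys : PSys) (D : Decls) (I : Interp) :
    Set Triple → ℕ → Assertion → Stmt → Assertion → Prop
  | asm {Φ p S q} : (p, S, q) ∈ Φ → HoareN sys D I Φ 0 p S q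
  | skip {Φ p} : HoareN sys D I Φ 1 p .skip p
  | assign {Φ p xs ts} :
      HoareN sys D I Φ 1 (substList p xs ts) (.assign xs ts) p
  | seq {Φ k₁ k₂ p r q S₁ S₂} :
      HoareN sys D I Φ k₁ p S₁ r → HoareN sys D I Φ k₂ r S₂ q →
      HoareN sys D I Φ (k₁ + k₂ + 1) p (.seq S₁ S₂) q
  | ifte {Φ k₁ k₂ p q B S₁ S₂} :
      HoareN sys D I Φ k₁ (.and p B) S₁ q → HoareN sys D I Φ k₂ (.and p (.not B)) S₂ q →
      HoareN sys D I Φ (k₁ + k₂ + 1) p (.ifte B S₁ S₂) q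
  | wh {Φ k p B S} :
      HoareN sys D I Φ k (.and p B) S p →
      HoareN sys D I Φ (k + 1) p (.wh B S) (.and p (.not B))
  | conseq {Φ k p p₁ q₁ q S} :
      valid I (p.imp p₁) → HoareN sys D I Φ k p₁ S q₁ → valid I (q₁.imp q) →
      HoareN sys D I Φ (k + 1) p S q
  | block {Φ k p q xs ts S} :
      (∀ x ∈ xs, x ∉ freeA q) →
      HoareN sys D I Φ k p (.seq (.assign xs ts) S) q →
      HoareN sys D I Φ (k + 1) p (.block xs ts S) q
  | subst {Φ k p q S} {xs ys : List Var} :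
      xs.Nodup → xs.length = ys.length →
      (∀ x ∈ xs, x ∉ varsProg D S) → (∀ y ∈ ys, y ∉ chg D S) →
      HoareN sys D I Φ k p S q →
      HoareN sys D I Φ (k + 1) (substList p xs (ys.map .var)) S (substList q xs (ys.map .var))
  | inv {Φ k p r q S} :
      (∀ x ∈ freeA p, x ∉ chg D S) →
      HoareN sys D I Φ k r S q →
      HoareN sys D I Φ (k + 1) (.and p r) S (.and p q)
  | exI {Φ k p q S xs} :
      (∀ x ∈ xs, x ∉ varsProg D S ∧ x ∉ freeA q) →
      HoareN sys D I Φ k p S q →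
      HoareN sys D I Φ (k + 1) (exList xs p) S q
  | pcall {Φ k p q P us S ts} :
      sys.hasPCall = true →
      lookupD D P = some (us, S) → ts.length = us.length →
      (∀ u ∈ us, u ∉ freeA q) →
      HoareN sys D I Φ k p (.call P (us.map .var)) q →
      HoareN sys D I Φ (k + 1) (substList p us ts) (.call P ts) q
  | recG {Φ p S q k} (pre post : Fin D.length → Assertion) (cnt : Fin D.length → ℕ) :
      sys.hasRecG = true →
      (∀ i : Fin D.length, ∀ u ∈ (D.get i).2.1, u ∉ freeA (post i)) →
      HoareN sys D I (genSet D pre post) k p S q →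
      (∀ i : Fin D.length,
        HoareN sys D I (genSet D pre post) (cnt i) (pre i) (D.get i).2.2 (post i)) →
      HoareN sys D I Φ (k + (∑ i, cnt i) + 1) p S q
  | recII {Φ p S q k} (cs : List ((PName × List Expr) × Assertion × Assertion))
      (cnt : Fin cs.length → ℕ)
      (usf : Fin cs.length → List Var) (Bf : Fin cs.length → Stmt) :
      sys.hasRecII = true →
      (∀ c, c ∈ cs.map Prod.fst ↔ c ∈ callsProg D S) →
      (∀ i : Fin cs.length, lookupD D (cs.get i).1.1 = some (usf i, Bf i)) →
      HoareN sys D I (asmSet cs) k p S q →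
      (∀ i : Fin cs.length,
        HoareN sys D I (asmSet cs) (cnt i)
          (cs.get i).2.1 (.block (usf i) (cs.get i).1.2 (Bf i)) (cs.get i).2.2) →
      HoareN sys D I Φ (k + (∑ i, cnt i) + 1) p S q

/-- `Φ ⊢_{sys,I} {p}S{q}`. -/
def Derivable (sys : PSys) (D : Decls) (I : Interp) (Φ : Set Triple)
    (p : Assertion) (S : Stmt) (q : Assertion) : Prop :=
  ∃ n, HoareN sys D I Φ n p S q
/-! Strongest postconditions and expressiveness -/

/-- `r` defines the strongest postcondition `sp_I(p, S)` in `I`. -/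
def DefinesSP (I : Interp) (D : Decls) (r p : Assertion) (S : Stmt) : Prop :=
  ∀ τ : I.State, satA I τ r ↔ ∃ σ : I.State, satA I σ p ∧ BigStep D I S σ τ

/-- The language is expressive relative to `I` (for the declarations `D`). -/
def Expressive (I : Interp) (D : Decls) : Prop :=
  ∀ (p : Assertion) (S : Stmt), ∃ r : Assertion, DefinesSP I D r p S

/-- `t` is a most general correctness specification for the procedure `P(ū)::S`:
`{x̄=z̄ ∧ ū=v̄} P(ū) {∃ū: SP_I(x̄=z̄ ∧ ū=v̄, S)}`, where `{x̄} = change(D)\{ū}` and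
`v̄, z̄` are lists of fresh variables of the same lengths as `ū` and `x̄`. -/
def IsMGCS (I : Interp) (D : Decls) (P : PName) (us : List Var) (S : Stmt)
    (t : Triple) : Prop :=
  ∃ (xs vs zs : List Var) (SP : Assertion),
    xs.Nodup ∧ (∀ x, x ∈ xs ↔ (x ∈ changeD D ∧ x ∉ us)) ∧
    vs.length = us.length ∧ zs.length = xs.length ∧
    (vs ++ zs).Nodup ∧
    (∀ v ∈ vs ++ zs, v ∉ varsD D ∧ v ∉ us ∧ v ∉ xs) ∧
    DefinesSP I D SP (.and (eqVars xs zs) (eqVars us vs)) S ∧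
    t = (.and (eqVars xs zs) (eqVars us vs),
         Stmt.call P (us.map Expr.var),
         exList us SP)

/-! Sizes of programs and bound on the length of proofs -/

def lS : Stmt → ℕ
  | .skip => 1
  | .assign _ _ => 1
  | .call _ _ => 1
  | .seq S₁ S₂ => lS S₁ + lS S₂ + 1
  | .ifte _ S₁ S₂ => lS S₁ + lS S₂ + 1
  | .wh _ S => lS S + 1
  | .block _ _ S => (1 + lS S + 1) + 1

def lD (D : Decls) : ℕ := (D.map (fun d => lS d.2.2)).sum

/-- `l(D | S)`. -/
def lProg (D : Decls) (S : Stmt) : ℕ := lD D + lS S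

/-- Number of parallel assignments occurring in `S`
(the initialization of a block counts as a parallel assignment). -/
def na : Stmt → ℕ
  | .skip => 0
  | .assign _ _ => 1
  | .call _ _ => 0
  | .seq S₁ S₂ => na S₁ + na S₂
  | .ifte _ S₁ S₂ => na S₁ + na S₂
  | .wh _ S => na S
  | .block _ _ S => na S + 1

/-- Number of block statements occurring in `S`. -/
def nb : Stmt → ℕ
  | .skip => 0
  | .assign _ _ => 0
  | .call _ _ => 0
  | .seq S₁ S₂ => nb S₁ + nb S₂
  | .ifte _ S₁ S₂ => nb S₁ + nb S₂
  | .wh _ S => nb S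
  | .block _ _ S => nb S + 1

/-- Number of procedure calls occurring in `S`. -/
def np : Stmt → ℕ
  | .skip => 0
  | .assign _ _ => 0
  | .call _ _ => 1
  | .seq S₁ S₂ => np S₁ + np S₂
  | .ifte _ S₁ S₂ => np S₁ + np S₂
  | .wh _ S => np S
  | .block _ _ S => np S

/-- Number of while loops occurring in `S`. -/
def nw : Stmt → ℕ
  | .skip => 0
  | .assign _ _ => 0
  | .call _ _ => 0
  | .seq S₁ S₂ => nw S₁ + nw S₂
  | .ifte _ S₁ S₂ => nw S₁ + nw S₂
  | .wh _ S => nw S + 1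
  | .block _ _ S => nw S

/-- `m(S) = l(S) + n_a(S) + 3·n_b(S) + 6·n_p(S) + n_w(S)`. -/
def mSize (S : Stmt) : ℕ := lS S + na S + 3 * nb S + 6 * np S + nw S

/-! Local and global occurrences, clash-freeness -/

/-- Variables having a local occurrence in a statement. -/
def localsS : Stmt → List Var
  | .skip => []
  | .assign _ _ => []
  | .call _ _ => []
  | .seq S₁ S₂ => localsS S₁ ++ localsS S₂
  | .ifte _ S₁ S₂ => localsS S₁ ++ localsS S₂
  | .wh _ S => localsS S
  | .block xs _ S => xs ++ varsS S

/-- Variables having a local occurrence in the program `(D | S)`. -/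
def localsProg (D : Decls) (S : Stmt) : List Var :=
  localsS S ++ D.flatMap (fun d => d.2.1 ++ localsS d.2.2)

/-- Variables having a global occurrence in a statement. -/
def globalsS : Stmt → List Var
  | .skip => []
  | .assign xs ts => xs ++ varsEs ts
  | .call _ ts => varsEs ts
  | .seq S₁ S₂ => globalsS S₁ ++ globalsS S₂
  | .ifte B S₁ S₂ => varsA B ++ globalsS S₁ ++ globalsS S₂
  | .wh B S => varsA B ++ globalsS S
  | .block _ ts _ => varsEs ts

/-- A program is clash-free if no variable has both a local occurrence in it and
a global occurrence in a procedure body. -/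
def ClashFree (D : Decls) (S : Stmt) : Prop :=
  ∀ x ∈ localsProg D S, ∀ d ∈ D, x ∉ globalsS d.2.2

/-- `Repl P ts B S₁ S₂`: `S₂` results from `S₁` by replacing one occurrence of
the procedure call `P(t̄)` by the statement `B`. -/
inductive Repl (P : PName) (ts : List Expr) (B : Stmt) : Stmt → Stmt → Prop
  | here : Repl P ts B (.call P ts) B
  | seqL {S₁ S₁' S₂} : Repl P ts B S₁ S₁' → Repl P ts B (.seq S₁ S₂) (.seq S₁' S₂)
  | seqR {S₁ S₂ S₂'} : Repl P ts B S₂ S₂' → Repl P ts B (.seq S₁ S₂) (.seq S₁ S₂')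
  | ifteL {C S₁ S₁' S₂} : Repl P ts B S₁ S₁' → Repl P ts B (.ifte C S₁ S₂) (.ifte C S₁' S₂)
  | ifteR {C S₁ S₂ S₂'} : Repl P ts B S₂ S₂' → Repl P ts B (.ifte C S₁ S₂) (.ifte C S₁ S₂')
  | wh {C S S'} : Repl P ts B S S' → Repl P ts B (.wh C S) (.wh C S')
  | block {xs es S S'} : Repl P ts B S S' → Repl P ts B (.block xs es S) (.block xs es S')

/-! Purity -/

/-- All procedure calls in `S` are generic. -/
def PureS (D : Decls) : Stmt → Prop
  | .skip => True
  | .assign _ _ => True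
  | .call P ts => ∃ us B, lookupD D P = some (us, B) ∧ ts = us.map Expr.var
  | .seq S₁ S₂ => PureS D S₁ ∧ PureS D S₂
  | .ifte _ S₁ S₂ => PureS D S₁ ∧ PureS D S₂
  | .wh _ S => PureS D S
  | .block _ _ S => PureS D S

/-- The program `(D | S)` is pure: all procedure calls occurring in it are generic. -/
def PureProg (D : Decls) (S : Stmt) : Prop :=
  PureS D S ∧ ∀ d ∈ D, PureS D d.2.2

/-! Equality of states and sets of states modulo a set of variables -/

/-- `σ = τ mod Z`. -/
def eqMod {α : Type _} (Z : List Var) (σ τ : Var → α) : Prop :=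
  ∀ x, x ∉ Z → σ x = τ x

/-- `X = Y mod Z`, for sets of states. -/
def setEqMod {α : Type _} (Z : List Var) (X Y : Set (Var → α)) : Prop :=
  (∀ σ ∈ X, ∃ τ ∈ Y, eqMod Z σ τ) ∧ (∀ τ ∈ Y, ∃ σ ∈ X, eqMod Z σ τ)


theorem updList_notMem {α} (σ : Var → α) (xs : List Var) (ds : List α) (x : Var)
    (h : x ∉ xs) : updList σ xs ds x = σ x := by
  induction xs generalizing ds σ with
  | nil => cases ds <;> rfl
  | cons y ys ih =>
    cases ds with
    | nil => rfl
    | cons d ds =>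
      simp only [List.mem_cons, not_or] at h
      simp only [updList, Function.update_of_ne h.1]
      exact ih _ _ h.2

theorem updList_map_self {α} (ρ σ : Var → α) (xs : List Var) (x : Var)
    (h : x ∈ xs) : updList ρ xs (xs.map σ) x = σ x := by
  induction xs with
  | nil => simp at h
  | cons y ys ih =>
    simp only [List.map_cons, updList]
    by_cases hxy : x = y
    · subst hxy; simp
    · rw [Function.update_of_ne hxy]
      exact ih ((List.mem_cons.mp h).resolve_left hxy)

theorem chgNo_subset_changeD {D : Decls} {P us S} (hmem : (P, us, S) ∈ D) :
    ∀ x ∈ chgNo S, x ∈ changeD D := by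
  intro x hx
  simp only [changeD, List.mem_flatMap]
  exact ⟨(P, us, S), hmem, hx⟩

theorem chg_sub (D : Decls) : ∀ S, ∀ x ∈ chg D S, x ∈ chgNo S ∨ x ∈ changeD D := by
  intro S
  induction S with
  | skip => simp [chg]
  | assign xs ts => exact fun x hx => Or.inl hx
  | call P ts =>
    intro x hx
    simp only [chg] at hx
    cases hl : lookupD D P with
    | none => rw [hl] at hx; simp at hx
    | some r =>
      rw [hl] at hx
      right
      exact (List.mem_filter.mp hx).1
  | seq S₁ S₂ ih1 ih2 =>
    intro x hx
    simp only [chg, chgNo, List.mem_append] at hx ⊢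
    rcases hx with h | h
    · rcases ih1 x h with h | h
      · exact Or.inl (Or.inl h)
      · exact Or.inr h
    · rcases ih2 x h with h | h
      · exact Or.inl (Or.inr h)
      · exact Or.inr h
  | ifte B S₁ S₂ ih1 ih2 =>
    intro x hx
    simp only [chg, chgNo, List.mem_append] at hx ⊢
    rcases hx with h | h
    · rcases ih1 x h with h | h
      · exact Or.inl (Or.inl h)
      · exact Or.inr h
    · rcases ih2 x h with h | h
      · exact Or.inl (Or.inr h)
      · exact Or.inr h
  | wh B S ih =>
    intro x hx
    exact ih x hx
  | block xs ts S ih =>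
    intro x hx
    simp only [chg, List.mem_filter] at hx
    rcases ih x hx.1 with h | h
    · exact Or.inl (List.mem_filter.mpr ⟨h, hx.2⟩)
    · exact Or.inr h

theorem bigstep_chg (D : Decls) (I : Interp) {S : Stmt} {σ τ : I.State}
    (h : BigStep D I S σ τ) : ∀ x, x ∉ chg D S → τ x = σ x := by
  induction h with
  | skip => intro x _; rfl
  | assign =>
    intro x hx
    exact updList_notMem _ _ _ _ (by simpa [chg] using hx)
  | seq h1 h2 ih1 ih2 =>
    intro x hx
    simp only [chg, List.mem_append, not_or] at hx
    rw [ih2 x hx.2, ih1 x hx.1]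
  | ifteT _ _ ih =>
    intro x hx
    simp only [chg, List.mem_append, not_or] at hx
    exact ih x hx.1
  | ifteF _ _ ih =>
    intro x hx
    simp only [chg, List.mem_append, not_or] at hx
    exact ih x hx.2
  | whT _ _ _ ih1 ih2 =>
    intro x hx
    rw [ih2 x hx, ih1 x hx]
  | whF => intro x _; rfl
  | block h ih =>
    rename_i xs ts S' σ' τ'
    intro x hx
    by_cases hmem : x ∈ xs
    · exact updList_map_self _ _ _ _ hmem
    · rw [updList_notMem _ _ _ _ hmem]
      apply ih
      simp only [chg, List.mem_append, not_or]
      refine ⟨hmem, ?_⟩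
      intro hcs
      exact hx (List.mem_filter.mpr ⟨hcs, by simpa using hmem⟩)
  | call hl hb ih =>
    rename_i P us S' ts σ' τ'
    intro x hx
    simp only [chg, hl] at hx
    apply ih
    simp only [chg, List.mem_filter]
    rintro ⟨hcs, hnus⟩
    apply hx
    apply List.mem_filter.mpr
    refine ⟨?_, hnus⟩
    rcases chg_sub D S' x hcs with h | h
    · have hmem : (P, us, S') ∈ D := by
        unfold lookupD at hl
        cases hfind : D.find? (fun d => d.1 == P) with
        | none => rw [hfind] at hl; simp at hl
        | some d =>
          obtain ⟨p1, p2⟩ := d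
          rw [hfind] at hl
          simp only [Option.map_some] at hl
          have hd1 : p1 = P := by simpa using List.find?_some hfind
          have hd2 : p2 = (us, S') := by simpa using hl
          subst hd1; subst hd2
          exact List.mem_of_find?_eq_some hfind
      exact chgNo_subset_changeD hmem x h
    · exact h

/-- Access and Change: only variables in `change(D | S)` can be
modified by `(D | S)`. -/
theorem access_and_change (D : Decls) (I : Interp) (S : Stmt) (σ τ : I.State)
    (h : Sem D I S σ = {τ}) :
    ∀ x : Var, x ∉ chg D S → τ x = σ x := by
  have hτ : BigStep D I S σ τ := by
    have : τ ∈ Sem D I S σ := by rw [h]; rfl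
    exact this
  exact bigstep_chg D I hτ
end

section
/- For all assertions p and q such that {ū} ∩ free(q) = ∅: I ⊨ {p} begin local ū:=t̄; S end {q} if and only if I ⊨ {p} ū:=t̄; S {q}. -/
theorem evalE_congr (I : Interp) : ∀ (t : Expr) (σ σ' : I.State),
    (∀ x ∈ varsE t, σ x = σ' x) → evalE I σ t = evalE I σ' t
  | .var x, σ, σ', h => by simp only [evalE]; exact h x (by simp [varsE])
  | .fn f ts, σ, σ', h => by
    simp only [evalE]
    congr 1
    refine List.map_congr_left ?_
    intro t _
    exact evalE_congr I t.1 σ σ' (fun x hx => h x (by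
      simp only [varsE, List.mem_flatMap]
      exact ⟨t, List.mem_attach _ _, hx⟩))
decreasing_by
  have := List.sizeOf_lt_of_mem t.2
  simp only [Expr.fn.sizeOf_spec]
  omega

theorem satA_congr (I : Interp) : ∀ (q : Assertion) (σ σ' : I.State),
    (∀ x ∈ freeA q, σ x = σ' x) → (satA I σ q ↔ satA I σ' q)
  | .tru, _, _, _ => Iff.rfl
  | .eq a b, σ, σ', h => by
    simp only [satA]
    rw [evalE_congr I a σ σ' (fun x hx => h x (by simp [freeA, hx])),
        evalE_congr I b σ σ' (fun x hx => h x (by simp [freeA, hx]))]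
  | .rel r ls, σ, σ', h => by
    simp only [satA, evalEs]
    have : ls.map (evalE I σ) = ls.map (evalE I σ') := by
      refine List.map_congr_left fun t ht => evalE_congr I t σ σ' fun x hx => h x ?_
      simp only [freeA, varsEs, List.mem_flatMap]; exact ⟨t, ht, hx⟩
    rw [this]
  | .not p, σ, σ', h => by
    simp only [satA]
    rw [satA_congr I p σ σ' h]
  | .and p q, σ, σ', h => by
    simp only [satA]
    rw [satA_congr I p σ σ' (fun x hx => h x (by simp [freeA, hx])),
        satA_congr I q σ σ' (fun x hx => h x (by simp [freeA, hx]))]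
  | .ex y p, σ, σ', h => by
    simp only [satA]
    refine exists_congr fun d => satA_congr I p _ _ fun x hx => ?_
    by_cases hxy : x = y
    · simp [hxy, Function.update]
    · have : x ∈ freeA (.ex y p) := by
        simp only [freeA, List.mem_filter, hx, true_and]
        simpa using hxy
      simp [Function.update, hxy, h x this]

theorem updList_notmem {α : Type _} (σ : Var → α) :
    ∀ (xs : List Var) (ds : List α) (x : Var), x ∉ xs → updList σ xs ds x = σ x
  | [], _, _, _ => rfl
  | _ :: _, [], _, _ => rfl
  | y :: xs, d :: ds, x, hx => by
    simp only [List.mem_cons, not_or] at hx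
    simp [updList, Function.update, hx.1, updList_notmem σ xs ds x hx.2]

/-- a block statement and its initialization-plus-body satisfy the
same correctness formulas whose postcondition has no free local variables. -/
theorem block_triple_iff (D : Decls) (I : Interp)
    (us : List Var) (ts : List Expr) (S : Stmt)
    (hus : us.Nodup) (hlen : ts.length = us.length) :
    ∀ p q : Assertion, (∀ u ∈ us, u ∉ freeA q) →
      (HoareValid D I p (.block us ts S) q ↔
        HoareValid D I p (.seq (.assign us ts) S) q) := by
  intro p q hq
  have key : ∀ (σ τ : I.State),
      (satA I (updList τ us (us.map σ)) q ↔ satA I τ q) := by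
    intro σ τ
    exact satA_congr I q _ _ fun x hx =>
      updList_notmem τ us (us.map σ) x (fun hmem => hq x hmem hx)
  constructor
  · intro h σ τ hp hstep
    have := h σ (updList τ us (us.map σ)) hp (.block hstep)
    exact (key σ τ).mp this
  · intro h σ τ' hp hstep
    cases hstep with
    | block hseq => exact (key _ _).mpr (h _ _ hp hseq)
end

section
/- For pure programs (programs in which all procedure calls are generic), the RECURSION rule is a derived rule of the proof system ABO: if, for some interpretation I, the premises {p₁}P₁(ū₁){q₁},…,{pₙ}Pₙ(ūₙ){qₙ} ⊢_{ABO,I} {p}S{q} and {p₁}P₁(ū₁){q₁},…,{pₙ}Pₙ(ūₙ){qₙ} ⊢_{ABO,I} {pᵢ}Sᵢ{qᵢ} for i = 1,…,n hold, where D = {Pᵢ(ūᵢ)::Sᵢ | i = 1,…,n} and {ūᵢ} ∩ free(qᵢ) = ∅ for each i, then ⊢_{ABO,I} {p}S{q}. -/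
/-! Auxiliary lemmas for statement 9 -/

theorem substE_id_aux (m : Var → Option Expr)
    (h : ∀ y, m y = none ∨ m y = some (.var y)) : ∀ t, substE m t = t
  | .var x => by rcases h x with h' | h' <;> simp [substE, h']
  | .fn f ts => by
    rw [substE]
    congr 1
    have : ∀ t ∈ ts.attach, substE m t.1 = t.1 :=
      fun t _ => substE_id_aux m h t.1
    rw [List.map_congr_left this, List.attach_map_subtype_val]
decreasing_by
  have := List.sizeOf_lt_of_mem t.2
  simp only [Expr.fn.sizeOf_spec]
  omega

theorem substA_id_aux : ∀ (p : Assertion) (m : Var → Option Expr),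
    (∀ y, m y = none ∨ m y = some (.var y)) → substA m p = p
  | .tru, m, h => rfl
  | .eq a b, m, h => by simp [substA, substE_id_aux m h]
  | .rel r ts, m, h => by
    simp only [substA]
    exact congrArg _ ((List.map_congr_left (fun t _ => substE_id_aux m h t)).trans
      (List.map_id ts))
  | .not p, m, h => by simp [substA, substA_id_aux p m h]
  | .and p q, m, h => by simp [substA, substA_id_aux p m h, substA_id_aux q m h]
  | .ex x p, m, h => by
    simp only [substA]
    rw [substA_id_aux p _ (fun y => by by_cases hy : y = x <;> simp [hy, h y])]

theorem subMap_self (us : List Var) (y : Var) :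
    subMap us (us.map .var) y = none ∨ subMap us (us.map .var) y = some (.var y) := by
  induction us with
  | nil => left; rfl
  | cons u us ih =>
    by_cases hy : u = y
    · right; simp [subMap, List.find?, hy]
    · have hb : (u == y) = false := by simp [hy]
      have heq : subMap (u :: us) ((u :: us).map .var) y = subMap us (us.map .var) y := by
        simp [subMap, List.find?, hb, List.zip]
      rw [heq]
      exact ih

theorem substList_id (p : Assertion) (us : List Var) :
    substList p us (us.map .var) = p :=
  substA_id_aux p _ (subMap_self us)

/-- Restriction of assumptions: in a system without the PROCEDURE CALL rule, a
derivation from `Φ` only uses assumptions whose statement's calls occur in `S`. -/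
theorem HoareN.restrict {sys : PSys} (hpc : sys.hasPCall = false) {D : Decls} {I : Interp}
    {Φ : Set Triple} {n : ℕ} {p : Assertion} {S : Stmt} {q : Assertion}
    (H : HoareN sys D I Φ n p S q) :
    ∀ Ψ : Set Triple, (∀ t ∈ Φ, (∀ c ∈ callsS t.2.1, c ∈ callsS S) → t ∈ Ψ) →
    HoareN sys D I Ψ n p S q := by
  induction H with
  | asm h => exact fun Ψ hΨ => .asm (hΨ _ h (fun c hc => hc))
  | skip => exact fun Ψ _ => .skip
  | assign => exact fun Ψ _ => .assign
  | seq h₁ h₂ ih₁ ih₂ =>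
    intro Ψ hΨ
    exact .seq (ih₁ Ψ (fun t ht hc => hΨ t ht
        (fun c hcc => List.mem_append_left _ (hc c hcc))))
      (ih₂ Ψ (fun t ht hc => hΨ t ht
        (fun c hcc => List.mem_append_right _ (hc c hcc))))
  | ifte h₁ h₂ ih₁ ih₂ =>
    intro Ψ hΨ
    exact .ifte (ih₁ Ψ (fun t ht hc => hΨ t ht
        (fun c hcc => List.mem_append_left _ (hc c hcc))))
      (ih₂ Ψ (fun t ht hc => hΨ t ht
        (fun c hcc => List.mem_append_right _ (hc c hcc))))
  | wh h ih =>
    intro Ψ hΨ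
    exact .wh (ih Ψ (fun t ht hc => hΨ t ht hc))
  | conseq h₁ h h₂ ih =>
    intro Ψ hΨ
    exact .conseq h₁ (ih Ψ hΨ) h₂
  | block hfr h ih =>
    intro Ψ hΨ
    exact .block hfr (ih Ψ (fun t ht hc => hΨ t ht hc))
  | subst h₁ h₂ h₃ h₄ h ih =>
    intro Ψ hΨ
    exact .subst h₁ h₂ h₃ h₄ (ih Ψ hΨ)
  | inv h₁ h ih =>
    intro Ψ hΨ
    exact .inv h₁ (ih Ψ hΨ)
  | exI h₁ h ih =>
    intro Ψ hΨ
    exact .exI h₁ (ih Ψ hΨ)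
  | pcall hflag _ _ _ _ _ =>
    rw [hpc] at hflag; exact absurd hflag (by simp)
  | recG pre post cnt hflag hfr h hi ih ihs =>
    intro Ψ _
    exact .recG pre post cnt hflag hfr h hi
  | recII cs cnt usf Bf hflag hcov hlook h hi ih ihs =>
    intro Ψ _
    exact .recII cs cnt usf Bf hflag hcov hlook h hi

theorem pureS_calls {D : Decls} : ∀ {T : Stmt}, PureS D T → ∀ c ∈ callsS T,
    ∃ us B, lookupD D c.1 = some (us, B) ∧ c.2 = us.map Expr.var := by
  intro T
  induction T with
  | skip => intro _ c hc; simp [callsS] at hc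
  | assign => intro _ c hc; simp [callsS] at hc
  | call P ts =>
    intro h c hc
    simp only [callsS, List.mem_singleton] at hc
    subst hc
    exact h
  | seq S₁ S₂ ih₁ ih₂ =>
    intro h c hc
    rcases List.mem_append.1 hc with h' | h'
    exacts [ih₁ h.1 c h', ih₂ h.2 c h']
  | ifte B S₁ S₂ ih₁ ih₂ =>
    intro h c hc
    rcases List.mem_append.1 hc with h' | h'
    exacts [ih₁ h.1 c h', ih₂ h.2 c h']
  | wh B T ih => intro h c hc; exact ih h c hc
  | block xs ts T ih => intro h c hc; exact ih h c hc

theorem pureProg_calls {D : Decls} {S : Stmt} (h : PureProg D S) :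
    ∀ c ∈ callsProg D S, ∃ us B, lookupD D c.1 = some (us, B) ∧ c.2 = us.map Expr.var := by
  intro c hc
  rcases List.mem_append.1 hc with h' | h'
  · exact pureS_calls h.1 c h'
  · obtain ⟨d, hd, hc'⟩ := List.mem_flatMap.1 h'
    exact pureS_calls (h.2 d hd) c hc'

theorem name_inj {D : Decls} (hwf : Decls.Wf D) {i j : Fin D.length}
    (h : (D.get i).1 = (D.get j).1) : i = j := by
  have hi : (i : ℕ) < (D.map Prod.fst).length := by simpa using i.2
  have hj : (j : ℕ) < (D.map Prod.fst).length := by simpa using j.2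
  have := (hwf.get_inj_iff (i := ⟨i, hi⟩) (j := ⟨j, hj⟩)).1
  simp only [List.get_eq_getElem, List.getElem_map, Fin.mk.injEq] at this
  exact Fin.ext (this (by simpa [List.get_eq_getElem] using h))

theorem lookup_to_get {D : Decls} {P : PName} {us : List Var} {B : Stmt}
    (h : lookupD D P = some (us, B)) : ∃ j : Fin D.length, D.get j = (P, us, B) := by
  unfold lookupD at h
  cases hf : D.find? (fun d => d.1 == P) with
  | none => rw [hf] at h; simp at h
  | some d =>
    rw [hf] at h
    simp only [Option.map_some, Option.some.injEq] at h
    have hd := List.mem_of_find?_eq_some hf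
    have hp : d.1 = P := by simpa using List.find?_some hf
    obtain ⟨j, hj⟩ := List.mem_iff_get.1 hd
    exact ⟨j, by rw [hj]; cases d; simp_all⟩

theorem lookupD_get {D : Decls} (hwf : Decls.Wf D) (j : Fin D.length) :
    lookupD D (D.get j).1 = some (D.get j).2 := by
  unfold lookupD
  cases hf : D.find? (fun d => d.1 == (D.get j).1) with
  | none =>
    exfalso
    have := List.find?_eq_none.1 hf (D.get j) (List.get_mem D j)
    exact this (by simp)
  | some d =>
    have hd := List.mem_of_find?_eq_some hf
    have hp : d.1 = (D.get j).1 := by simpa using List.find?_some hf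
    obtain ⟨i, hi⟩ := List.mem_iff_get.1 hd
    have : i = j := name_inj hwf (by rw [hi]; exact hp)
    subst this
    rw [← hi]
    simp

/-- Choice of pre/post assertions for a call, determined by the procedure name. -/
def idxA (D : Decls) (pre post : Fin D.length → Assertion) (c : PName × List Expr) :
    Assertion × Assertion :=
  match (List.finRange D.length).find? (fun i => (D.get i).1 == c.1) with
  | some i => (pre i, post i)
  | none => (.tru, .tru)

theorem idxA_eq {D : Decls} (hwf : Decls.Wf D) (pre post : Fin D.length → Assertion)
    {c : PName × List Expr} {j : Fin D.length} (h : c.1 = (D.get j).1) :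
    idxA D pre post c = (pre j, post j) := by
  unfold idxA
  cases hf : (List.finRange D.length).find? (fun i => (D.get i).1 == c.1) with
  | none =>
    exfalso
    have := List.find?_eq_none.1 hf j (List.mem_finRange j)
    exact this (by simp [h])
  | some i =>
    have hp : (D.get i).1 = c.1 := by simpa using List.find?_some hf
    have : i = j := name_inj hwf (by rw [hp, h])
    subst this
    rfl

theorem block_deriv {sys : PSys} {D : Decls} {I : Interp} {Φ : Set Triple} {n : ℕ}
    {p q : Assertion} {us : List Var} {B : Stmt}
    (h : HoareN sys D I Φ n p B q) (hf : ∀ u ∈ us, u ∉ freeA q) :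
    HoareN sys D I Φ (1 + n + 1 + 1) p (.block us (us.map .var) B) q := by
  apply HoareN.block hf
  have ha : HoareN sys D I Φ 1 p (.assign us (us.map .var)) p := by
    have := @HoareN.assign sys D I Φ p us (us.map .var)
    rwa [substList_id] at this
  exact ha.seq h

/-- for pure programs the RECURSION rule is a derived rule of ABO. -/
theorem recursion_derived_in_ABO (D : Decls) (I : Interp) (hwf : Decls.Wf D)
    (p q : Assertion) (S : Stmt)
    (hpure : PureProg D S)
    (pre post : Fin D.length → Assertion)
    (hfree : ∀ i : Fin D.length, ∀ u ∈ (D.get i).2.1, u ∉ freeA (post i))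
    (hmain : Derivable .ABO D I (genSet D pre post) p S q)
    (hbody : ∀ i : Fin D.length,
      Derivable .ABO D I (genSet D pre post) (pre i) (D.get i).2.2 (post i)) :
    Derivable .ABO D I ∅ p S q := by
  classical
  obtain ⟨k, hm⟩ := hmain
  set cs : List ((PName × List Expr) × Assertion × Assertion) :=
    (callsProg D S).map (fun c => (c, idxA D pre post c)) with hcs
  -- membership of generic-call triples in the assumption set
  have hgenmem : ∀ j : Fin D.length,
      ((D.get j).1, ((D.get j).2.1).map Expr.var) ∈ callsProg D S →
      (pre j, genCall D j, post j) ∈ asmSet cs := by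
    intro j hj
    refine ⟨(((D.get j).1, ((D.get j).2.1).map Expr.var),
      idxA D pre post ((D.get j).1, ((D.get j).2.1).map Expr.var)), ?_, ?_⟩
    · exact List.mem_map_of_mem hj
    · rw [idxA_eq hwf pre post rfl]
      rfl
  have hrestr : ∀ T : Stmt, (∀ c ∈ callsS T, c ∈ callsProg D S) →
      ∀ t ∈ genSet D pre post, (∀ c ∈ callsS t.2.1, c ∈ callsS T) → t ∈ asmSet cs := by
    intro T hT t ht hc
    obtain ⟨j, rfl⟩ := ht
    have hmem : ((D.get j).1, ((D.get j).2.1).map Expr.var) ∈ callsS T := by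
      apply hc
      simp [genCall, callsS]
    exact hgenmem j (hT _ hmem)
  have hmain' : HoareN .ABO D I (asmSet cs) k p S q :=
    hm.restrict rfl _ (hrestr S (fun c hc => List.mem_append_left _ hc))
  have hbody' : ∀ j : Fin D.length,
      ∃ n, HoareN .ABO D I (asmSet cs) n (pre j) (D.get j).2.2 (post j) := by
    intro j
    obtain ⟨n, hb⟩ := hbody j
    refine ⟨n, hb.restrict rfl _ (hrestr _ (fun c hc => ?_))⟩
    exact List.mem_append_right _
      (List.mem_flatMap.2 ⟨D.get j, List.get_mem D j, hc⟩)
  choose cntD hcntD using hbody'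
  -- each entry of cs corresponds to a declaration index
  have hentry : ∀ i : Fin cs.length, ∃ j : Fin D.length,
      cs.get i = (((D.get j).1, ((D.get j).2.1).map Expr.var), pre j, post j) := by
    intro i
    have hmem : cs.get i ∈ cs := List.get_mem cs i
    obtain ⟨c, hcmem, hc⟩ := List.mem_map.1 hmem
    obtain ⟨us, B, hlk, hts⟩ := pureProg_calls hpure c hcmem
    obtain ⟨j, hj⟩ := lookup_to_get hlk
    refine ⟨j, ?_⟩
    have h1 : c.1 = (D.get j).1 := by rw [hj]
    have h2 : c.2 = ((D.get j).2.1).map Expr.var := by rw [hj]; exact hts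
    rw [← hc, idxA_eq hwf pre post h1]
    have : c = ((D.get j).1, ((D.get j).2.1).map Expr.var) := by
      cases c; simp_all
    rw [this]
  choose jf hjf using hentry
  refine ⟨_, HoareN.recII cs (fun i => 1 + cntD (jf i) + 1 + 1)
    (fun i => (D.get (jf i)).2.1) (fun i => (D.get (jf i)).2.2) rfl ?_ ?_ hmain' ?_⟩
  · intro c
    rw [hcs]
    simp
  · intro i
    rw [hjf i]
    exact lookupD_get hwf (jf i)
  · intro i
    rw [hjf i]
    exact block_deriv (hcntD (jf i)) (hfree (jf i))
end
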